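/- arXiv:1504.06810 — 2 statements merged into one kernel-verified Lean document; each statement's English description precedes it below -/
import Mathlib

section
/- Let h : ℕ → ℝ and len : ℕ → ℝ be sequences with h 0 ≥ 0, len n > 0 for all n, and h (n+1) > h n + len n for all n (the DoS off/on transition times and durations). Let Δ* > 0. For 0 ≤ τ ≤ t define Ξ(τ,t) = (⋃ₙ [h n, h n + len n)) ∩ [τ,t], Ξ̄(τ,t) = (⋃ₙ [h n, h n + len n + Δ*)) ∩ [τ,t], Θ̄(τ,t) = [τ,t] \ Ξ̄(τ,t), and n(τ,t) = the (finite) cardinality of {n : h n ∈ [τ,t)}. Suppose there exist η ≥ 0, τ_f > Δ*, κ ≥ 0, τ_d > 1 such that for all 0 ≤ τ ≤ t: n(τ,t) ≤ η + (t-τ)/τ_f and the Lebesgue measure of Ξ(τ,t) is at most κ + (t-τ)/τ_d. If φ := 1/τ_d + Δ*/τ_f < 1, then for every τ ≥ 0 and every t > τ + (κ + (1+η)Δ*)/(1-φ), the set Θ̄(τ,t) has strictly positive Lebesgue measure. -/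
/-!
Away from DoS, the delayed set `Ξ̄(τ,t)` only adds a tail `[h n + len n, h n + len n + Δ)` to
each DoS interval. Inside `[τ,t]` these tails belong to the DoS intervals starting in `[τ,t)`,
plus at most one more, that of the last interval starting before `τ`. Hence
`|Ξ̄(τ,t)| ≤ |Ξ(τ,t)| + (n(τ,t) + 1) Δ`, and the frequency and duration assumptions bound this
by `κ + (t-τ)/τd + (η + (t-τ)/τf) Δ + Δ`, which is `< t - τ` exactly when
`t - τ > (κ + (1+η)Δ)/(1-φ)`.
-/

open MeasureTheory Set

theorem Set.finite_of_ncard_inter_Iio_le {S : Set ℕ} (C : ℕ)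
    (hS : ∀ m ∈ S, (S ∩ Iio m).ncard ≤ C) : S.Finite := by
  by_contra hinf
  obtain ⟨F, hFS, hF⟩ := Set.Infinite.exists_subset_card_eq hinf (C + 1)
  obtain ⟨m, hmS, hm⟩ := Set.Infinite.exists_gt hinf (F.sup id)
  have hFm : (F : Set ℕ) ⊆ S ∩ Iio m := fun n hn =>
    ⟨hFS hn, (F.le_sup (f := id) hn).trans_lt hm⟩
  have hcard := ncard_le_ncard hFm (toFinite _)
  rw [ncard_coe_finset, hF] at hcard
  exact absurd (hcard.trans (hS m hmS)) (by omega)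

namespace DoSSchedule

variable {h len : ℕ → ℝ}

theorem strictMono (hlen : ∀ n, 0 < len n) (hsep : ∀ n, h n + len n < h (n + 1)) :
    StrictMono h :=
  strictMono_nat_of_lt_succ fun n => by linarith [hlen n, hsep n]

theorem end_lt_of_lt (hlen : ∀ n, 0 < len n) (hsep : ∀ n, h n + len n < h (n + 1))
    {m n : ℕ} (hmn : m < n) : h m + len m < h n :=
  (hsep m).trans_le ((strictMono hlen hsep).monotone hmn)

theorem finite_onsets (hmono : StrictMono h) {τ t C : ℝ}
    (hC : ∀ s, τ ≤ s → s ≤ t → ({n | h n ∈ Ico τ s}.ncard : ℝ) ≤ C) :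
    {n | h n ∈ Ico τ t}.Finite := by
  refine finite_of_ncard_inter_Iio_le ⌈C⌉₊ fun m hm => ?_
  have hsub : {n | h n ∈ Ico τ t} ∩ Iio m ⊆ {n | h n ∈ Ico τ (h m)} :=
    fun n hn => ⟨hn.1.1, hmono hn.2⟩
  have hfin : {n | h n ∈ Ico τ (h m)}.Finite :=
    (finite_Iio m).subset fun n hn => hmono.lt_iff_lt.1 hn.2
  have hle : ({n | h n ∈ Ico τ (h m)}.ncard : ℝ) ≤ ⌈C⌉₊ :=
    (hC _ hm.1 hm.2.le).trans (Nat.le_ceil C)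
  exact (ncard_le_ncard hsub hfin).trans (mod_cast hle)

/-- The point `c` is the end of the DoS interval straddling `τ`, or `τ` itself if there is none:
the tails of all DoS intervals starting before `τ` are then covered by DoS and `[c, c + Δ)`. -/
theorem exists_tail_subset_before (hlen : ∀ n, 0 < len n) (hsep : ∀ n, h n + len n < h (n + 1))
    (τ Δ : ℝ) : ∃ c, ∀ n, h n < τ →
      Ico (h n + len n) (h n + len n + Δ) ∩ Ici τ ⊆
        (⋃ m, Ico (h m) (h m + len m)) ∪ Ico c (c + Δ) := by
  by_cases hstraddle : ∃ m, h m < τ ∧ τ < h m + len m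
  · obtain ⟨m, hmτ, hτm⟩ := hstraddle
    refine ⟨h m + len m, fun n hnτ x ⟨⟨_, hxn⟩, hτx⟩ => ?_⟩
    have hnm : h n + len n ≤ h m + len m := by
      rcases lt_trichotomy n m with hlt | rfl | hgt
      · linarith [end_lt_of_lt hlen hsep hlt, hlen m]
      · rfl
      · linarith [end_lt_of_lt hlen hsep hgt]
    by_cases hxm : x < h m + len m
    · exact Or.inl (mem_iUnion.2 ⟨m, hmτ.le.trans hτx, hxm⟩)
    · exact Or.inr ⟨not_lt.1 hxm, by linarith⟩
  · push Not at hstraddle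
    exact ⟨τ, fun n hnτ x ⟨⟨_, hxn⟩, hτx⟩ => Or.inr ⟨hτx, by linarith [hstraddle n hnτ]⟩⟩

theorem exists_delayed_inter_subset (hlen : ∀ n, 0 < len n)
    (hsep : ∀ n, h n + len n < h (n + 1)) (τ t Δ : ℝ) : ∃ c,
    (⋃ n, Ico (h n) (h n + len n + Δ)) ∩ Icc τ t ⊆
      ((⋃ n, Ico (h n) (h n + len n)) ∩ Icc τ t) ∪
        (⋃ n ∈ {n | h n ∈ Ico τ t}, Ico (h n + len n) (h n + len n + Δ)) ∪ Ico c (c + Δ) := by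
  obtain ⟨c, hc⟩ := exists_tail_subset_before hlen hsep τ Δ
  refine ⟨c, fun x ⟨hx, hxτt⟩ => ?_⟩
  obtain ⟨n, hnx, hxn⟩ := mem_iUnion.1 hx
  by_cases hxe : x < h n + len n
  · exact Or.inl (Or.inl ⟨mem_iUnion.2 ⟨n, hnx, hxe⟩, hxτt⟩)
  push Not at hxe
  by_cases hnτ : τ ≤ h n
  · exact Or.inl (Or.inr (mem_biUnion (x := n) ⟨hnτ, by linarith [hlen n, hxτt.2]⟩ ⟨hxe, hxn⟩))
  · rcases hc n (not_le.1 hnτ) ⟨⟨hxe, hxn⟩, hxτt.1⟩ with hDoS | htail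
    · exact Or.inl (Or.inl ⟨hDoS, hxτt⟩)
    · exact Or.inr htail

theorem volume_delayed_inter_le (hlen : ∀ n, 0 < len n)
    (hsep : ∀ n, h n + len n < h (n + 1)) {τ t Δ a N : ℝ} (hΔ : 0 ≤ Δ) (ha : 0 ≤ a)
    (hS : {n | h n ∈ Ico τ t}.Finite)
    (hDoS : volume ((⋃ n, Ico (h n) (h n + len n)) ∩ Icc τ t) ≤ ENNReal.ofReal a)
    (hN : ({n | h n ∈ Ico τ t}.ncard : ℝ) ≤ N) :
    volume ((⋃ n, Ico (h n) (h n + len n + Δ)) ∩ Icc τ t) ≤ ENNReal.ofReal (a + N * Δ + Δ) := by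
  obtain ⟨c, hcover⟩ := exists_delayed_inter_subset hlen hsep τ t Δ
  have hN0 : 0 ≤ N := (Nat.cast_nonneg _).trans hN
  have htails : volume (⋃ n ∈ {n | h n ∈ Ico τ t}, Ico (h n + len n) (h n + len n + Δ)) ≤
      ENNReal.ofReal (N * Δ) := by
    rw [← hS.coe_toFinset]
    refine (measure_biUnion_finset_le _ _).trans ?_
    simp only [Real.volume_Ico, add_sub_cancel_left, Finset.sum_const, nsmul_eq_mul,
      ← ncard_eq_toFinset_card _ hS, ENNReal.ofReal_mul hN0, ← ENNReal.ofReal_natCast]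
    gcongr
  calc volume ((⋃ n, Ico (h n) (h n + len n + Δ)) ∩ Icc τ t)
      ≤ ENNReal.ofReal a + ENNReal.ofReal (N * Δ) + ENNReal.ofReal Δ := by
        refine (measure_mono hcover).trans ((measure_union_le _ _).trans ?_)
        gcongr
        · exact (measure_union_le _ _).trans (add_le_add hDoS htails)
        · rw [Real.volume_Ico, add_sub_cancel_left]
    _ = ENNReal.ofReal (a + N * Δ + Δ) := by
        rw [ENNReal.ofReal_add (by positivity) hΔ, ENNReal.ofReal_add ha (by positivity)]

end DoSSchedule

theorem delayed_budget_lt {κ η Δ τd τf L : ℝ} (hφ : 1 / τd + Δ / τf < 1)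
    (hL : (κ + (1 + η) * Δ) * (1 - (1 / τd + Δ / τf))⁻¹ < L) :
    κ + L / τd + (η + L / τf) * Δ + Δ < L := by
  have hL' := (mul_inv_lt_iff₀ (sub_pos.2 hφ)).1 hL
  have hexpand : L * (1 - (1 / τd + Δ / τf)) = L - L / τd - L / τf * Δ := by ring
  linarith

theorem persistency_of_communication_general
    (h len : ℕ → ℝ) (Δ : ℝ)
    (hlen : ∀ n, 0 < len n)
    (hsep : ∀ n, h n + len n < h (n + 1))
    (hΔ : 0 < Δ)
    (η τf κ τd : ℝ)
    (hη : 0 ≤ η) (hτf : Δ < τf) (hκ : 0 ≤ κ) (hτd : 1 < τd)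
    (hfreq : ∀ τ t : ℝ, 0 ≤ τ → τ ≤ t →
      ((Set.ncard {n : ℕ | h n ∈ Set.Ico τ t} : ℝ) ≤ η + (t - τ) / τf))
    (hdur : ∀ τ t : ℝ, 0 ≤ τ → τ ≤ t →
      volume ((⋃ n, Set.Ico (h n) (h n + len n)) ∩ Set.Icc τ t)
        ≤ ENNReal.ofReal (κ + (t - τ) / τd))
    (hφ : 1 / τd + Δ / τf < 1) :
    ∀ τ t : ℝ, 0 ≤ τ →
      t > τ + (κ + (1 + η) * Δ) * (1 - (1 / τd + Δ / τf))⁻¹ →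
      0 < volume (Set.Icc τ t \
        ((⋃ n, Set.Ico (h n) (h n + len n + Δ)) ∩ Set.Icc τ t)) := by
  intro τ t hτ ht
  have hτf0 : 0 < τf := hΔ.trans hτf
  have hτd0 : 0 < τd := one_pos.trans hτd
  have hτt : τ < t := by
    have : 0 < (κ + (1 + η) * Δ) * (1 - (1 / τd + Δ / τf))⁻¹ :=
      mul_pos (by positivity) (inv_pos.2 (by linarith))
    linarith
  have hS : {n | h n ∈ Ico τ t}.Finite :=
    DoSSchedule.finite_onsets (C := η + (t - τ) / τf) (DoSSchedule.strictMono hlen hsep)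
      fun s hs hst => (hfreq τ s hτ hs).trans (by gcongr)
  have hbudget := delayed_budget_lt hφ (lt_sub_iff_add_lt'.2 ht)
  have hdelayed := DoSSchedule.volume_delayed_inter_le hlen hsep hΔ.le
    (add_nonneg hκ (div_nonneg (sub_nonneg.2 hτt.le) hτd0.le)) hS
    (hdur τ t hτ hτt.le) (hfreq τ t hτ hτt.le)
  have hlt : volume ((⋃ n, Ico (h n) (h n + len n + Δ)) ∩ Icc τ t) < volume (Icc τ t) := by
    rw [Real.volume_Icc]
    exact hdelayed.trans_lt ((ENNReal.ofReal_lt_ofReal_iff (by linarith)).2 hbudget)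
  exact (tsub_pos_of_lt hlt).trans_le le_measure_sdiff

/-- **Proposition 2 (Persistency-of-Communication).**
Under the DoS frequency and duration assumptions with
`φ = 1/τd + Δ/τf < 1`, the set `Θ̄(τ,t)` of time instants in `[τ,t]`
where communication (including the actuation delay `Δ`) is possible
has strictly positive Lebesgue measure for every
`t > τ + (κ + (1+η)Δ)/(1-φ)`. -/
theorem persistency_of_communication
    (h len : ℕ → ℝ) (Δ : ℝ)
    (h0 : 0 ≤ h 0) (hlen : ∀ n, 0 < len n)
    (hsep : ∀ n, h n + len n < h (n + 1))
    (hΔ : 0 < Δ)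
    (η τf κ τd : ℝ)
    (hη : 0 ≤ η) (hτf : Δ < τf) (hκ : 0 ≤ κ) (hτd : 1 < τd)
    (hfreq : ∀ τ t : ℝ, 0 ≤ τ → τ ≤ t →
      ((Set.ncard {n : ℕ | h n ∈ Set.Ico τ t} : ℝ) ≤ η + (t - τ) / τf))
    (hdur : ∀ τ t : ℝ, 0 ≤ τ → τ ≤ t →
      volume ((⋃ n, Set.Ico (h n) (h n + len n)) ∩ Set.Icc τ t)
        ≤ ENNReal.ofReal (κ + (t - τ) / τd))
    (hφ : 1 / τd + Δ / τf < 1) :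
    ∀ τ t : ℝ, 0 ≤ τ →
      t > τ + (κ + (1 + η) * Δ) * (1 - (1 / τd + Δ / τf))⁻¹ →
      0 < volume (Set.Icc τ t \
        ((⋃ n, Set.Ico (h n) (h n + len n + Δ)) ∩ Set.Icc τ t)) :=
  persistency_of_communication_general h len Δ hlen hsep hΔ η τf κ τd hη hτf hκ hτd hfreq hdur hφ
end

section
/- Let h : ℕ → ℝ and len : ℕ → ℝ be sequences with h 0 ≥ 0, len n > 0 for all n, and h (n+1) > h n + len n for all n. Let Δ* > 0, and define for 0 ≤ τ ≤ t the sets Ξ(τ,t) = (⋃ₙ [h n, h n + len n)) ∩ [τ,t] and Ξ̄(τ,t) = (⋃ₙ [h n, h n + len n + Δ*)) ∩ [τ,t], and the (finite) count n(τ,t) = #{n : h n ∈ [τ,t)}. Suppose there exist η ≥ 0, τ_f > Δ*, κ ≥ 0, τ_d > 1 such that n(τ,t) ≤ η + (t-τ)/τ_f and the Lebesgue measure of Ξ(τ,t) is at most κ + (t-τ)/τ_d, for all 0 ≤ τ ≤ t. Then for all 0 ≤ τ ≤ t the Lebesgue measure of Ξ̄(τ,t) is at most κ + (t-τ)/τ_d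 + (η + (t-τ)/τ_f + 1)·Δ*. -/
/-! A point of `Ξ̄(τ,t)` outside `Ξ(τ,t)` lies in the `Δ`-tail `[h n + len n, h n + len n + Δ)`
of some attack `n`. Attacks starting in `[τ,t)` contribute at most `n(τ,t)` tails, attacks starting
at or after `t` only the point `t`, and, since the attack intervals are ordered and disjoint, all
attacks starting before `τ` together contribute at most one tail, the one that follows the attack
in progress at time `τ`. Hence `|Ξ̄(τ,t)| ≤ |Ξ(τ,t)| + (n(τ,t) + 1) Δ`. The count `n(τ,t)` is
finite because the frequency bound forces `h k ≥ (k - η) τf`. -/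

open MeasureTheory Set

section AttackIntervals

variable {h len : ℕ → ℝ}

theorem strictMono_of_add_lt_succ (hlen : ∀ n, 0 < len n) (hsep : ∀ n, h n + len n < h (n + 1)) :
    StrictMono h :=
  strictMono_nat_of_lt_succ fun n => (lt_add_of_pos_right _ (hlen n)).trans (hsep n)

theorem add_lt_apply_of_lt (hmono : StrictMono h) (hsep : ∀ n, h n + len n < h (n + 1))
    {m n : ℕ} (hmn : m < n) : h m + len m < h n :=
  (hsep m).trans_le (hmono.monotone hmn)

/-- `c` is the end of the attack in progress at time `τ`, or `τ` itself if there is none. -/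
theorem exists_Ico_subset_and_end_le (hlen : ∀ n, 0 < len n) (hsep : ∀ n, h n + len n < h (n + 1))
    (τ : ℝ) : ∃ c, Ico τ c ⊆ ⋃ m, Ico (h m) (h m + len m) ∧ ∀ n, h n < τ → h n + len n ≤ c := by
  have hmono := strictMono_of_add_lt_succ hlen hsep
  by_cases hstr : ∃ n₀, h n₀ < τ ∧ τ < h n₀ + len n₀
  · obtain ⟨n₀, hn₀τ, hτn₀⟩ := hstr
    refine ⟨h n₀ + len n₀, fun x hx => mem_iUnion.2 ⟨n₀, hn₀τ.le.trans hx.1, hx.2⟩, ?_⟩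
    intro n hnτ
    rcases lt_trichotomy n n₀ with hlt | rfl | hgt
    · linarith [add_lt_apply_of_lt hmono hsep hlt, hlen n₀]
    · exact le_rfl
    · linarith [add_lt_apply_of_lt hmono hsep hgt]
  · push Not at hstr
    exact ⟨τ, by simp, hstr⟩

theorem ncard_setOf_mem_Ico_zero (hmono : StrictMono h) (h0 : 0 ≤ h 0) (k : ℕ) :
    {n | h n ∈ Ico 0 (h k)}.ncard = k := by
  have hnonneg : ∀ n, 0 ≤ h n := fun n => h0.trans (hmono.monotone n.zero_le)
  have hset : {n | h n ∈ Ico 0 (h k)} = Iio k := by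
    ext n
    simp only [mem_ofPred_eq, mem_Ico, mem_Iio, hnonneg n, true_and, hmono.lt_iff_lt]
  rw [hset, ← Finset.coe_range, ncard_coe_finset, Finset.card_range]

theorem exists_le_apply_of_natCast_le {η τf : ℝ} (hτf : 0 < τf)
    (hgrow : ∀ k : ℕ, (k : ℝ) ≤ η + h k / τf) (t : ℝ) : ∃ N, t ≤ h N := by
  obtain ⟨k, hk⟩ := exists_nat_ge (η + t / τf)
  refine ⟨k, (div_le_div_iff_of_pos_right hτf).1 ?_⟩
  linarith [hgrow k]

theorem extended_inter_Icc_subset {Δ c τ t : ℝ} (hc : Ico τ c ⊆ ⋃ m, Ico (h m) (h m + len m))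
    (hcend : ∀ n, h n < τ → h n + len n ≤ c) :
    (⋃ n, Ico (h n) (h n + len n + Δ)) ∩ Icc τ t ⊆
      ((⋃ n, Ico (h n) (h n + len n)) ∩ Icc τ t ∪ Ico c (c + Δ)) ∪
        ({t} ∪ ⋃ n ∈ {n | h n ∈ Ico τ t}, Ico (h n + len n) (h n + len n + Δ)) := by
  rintro x ⟨hx, hxτ, hxt⟩
  obtain ⟨n, hnx, hxn⟩ := mem_iUnion.1 hx
  by_cases hxe : x < h n + len n
  · exact Or.inl (Or.inl ⟨mem_iUnion.2 ⟨n, hnx, hxe⟩, hxτ, hxt⟩)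
  push Not at hxe
  rcases lt_or_ge (h n) τ with hnτ | hτn
  · by_cases hxc : x < c
    · exact Or.inl (Or.inl ⟨hc ⟨hxτ, hxc⟩, hxτ, hxt⟩)
    · exact Or.inl (Or.inr ⟨not_lt.1 hxc, by linarith [hcend n hnτ]⟩)
  rcases lt_or_ge (h n) t with hnt | htn
  · exact Or.inr (Or.inr (mem_biUnion (show h n ∈ Ico τ t from ⟨hτn, hnt⟩) ⟨hxe, hxn⟩))
  · exact Or.inr (Or.inl (le_antisymm hxt (htn.trans hnx)))

end AttackIntervals

theorem volume_biUnion_Ico_add_le {ι : Type*} (a : ι → ℝ) {S : Set ι} (hS : S.Finite) (Δ : ℝ) :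
    volume (⋃ i ∈ S, Ico (a i) (a i + Δ)) ≤ S.ncard * ENNReal.ofReal Δ := by
  rw [← hS.coe_toFinset, ncard_coe_finset]
  refine (measure_biUnion_finset_le _ _).trans_eq ?_
  simp only [Real.volume_Ico, add_sub_cancel_left, Finset.sum_const, nsmul_eq_mul]

theorem volume_extended_inter_Icc_le {h len : ℕ → ℝ} {Δ : ℝ} (hlen : ∀ n, 0 < len n)
    (hsep : ∀ n, h n + len n < h (n + 1)) (hΔ : 0 ≤ Δ) {τ t : ℝ}
    (hfin : {n | h n ∈ Ico τ t}.Finite) :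
    volume ((⋃ n, Ico (h n) (h n + len n + Δ)) ∩ Icc τ t) ≤
      volume ((⋃ n, Ico (h n) (h n + len n)) ∩ Icc τ t) +
        ENNReal.ofReal (({n | h n ∈ Ico τ t}.ncard + 1) * Δ) := by
  obtain ⟨c, hc, hcend⟩ := exists_Ico_subset_and_end_le hlen hsep τ
  calc _ ≤ volume ((⋃ n, Ico (h n) (h n + len n)) ∩ Icc τ t) + volume (Ico c (c + Δ)) +
          (volume ({t} : Set ℝ) +
            volume (⋃ n ∈ {n | h n ∈ Ico τ t}, Ico (h n + len n) (h n + len n + Δ))) :=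
        (measure_mono (extended_inter_Icc_subset hc hcend)).trans <| (measure_union_le _ _).trans <|
          add_le_add (measure_union_le _ _) (measure_union_le _ _)
    _ ≤ volume ((⋃ n, Ico (h n) (h n + len n)) ∩ Icc τ t) + ENNReal.ofReal Δ +
          (0 + {n | h n ∈ Ico τ t}.ncard * ENNReal.ofReal Δ) := by
        gcongr
        · simp
        · simp
        · exact volume_biUnion_Ico_add_le _ hfin Δ
    _ = _ := by
        rw [zero_add, add_assoc, ← ENNReal.ofReal_natCast, ← ENNReal.ofReal_mul (by positivity),
          ← ENNReal.ofReal_add hΔ (by positivity)]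
        ring_nf

theorem extended_DoS_measure_assumption_bound_general
    (h len : ℕ → ℝ) (Δ : ℝ)
    (h0 : 0 ≤ h 0) (hlen : ∀ n, 0 < len n)
    (hsep : ∀ n, h n + len n < h (n + 1))
    (hΔ : 0 < Δ)
    (η τf κ τd : ℝ)
    (hτf : Δ < τf) (hκ : 0 ≤ κ) (hτd : 1 < τd)
    (hfreq : ∀ τ t : ℝ, 0 ≤ τ → τ ≤ t →
      ((Set.ncard {n : ℕ | h n ∈ Set.Ico τ t} : ℝ) ≤ η + (t - τ) / τf))
    (hdur : ∀ τ t : ℝ, 0 ≤ τ → τ ≤ t →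
      volume ((⋃ n, Set.Ico (h n) (h n + len n)) ∩ Set.Icc τ t)
        ≤ ENNReal.ofReal (κ + (t - τ) / τd)) :
    ∀ τ t : ℝ, 0 ≤ τ → τ ≤ t →
      volume ((⋃ n, Set.Ico (h n) (h n + len n + Δ)) ∩ Set.Icc τ t)
        ≤ ENNReal.ofReal (κ + (t - τ) / τd + (η + (t - τ) / τf + 1) * Δ) := by
  intro τ t hτ hτt
  have hmono := strictMono_of_add_lt_succ hlen hsep
  have hgrow (k : ℕ) : (k : ℝ) ≤ η + h k / τf := by
    have := hfreq 0 (h k) le_rfl (h0.trans (hmono.monotone k.zero_le))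
    rwa [ncard_setOf_mem_Ico_zero hmono h0 k, sub_zero] at this
  obtain ⟨N, hN⟩ := exists_le_apply_of_natCast_le (hΔ.trans hτf) hgrow t
  have hfin : {n | h n ∈ Ico τ t}.Finite :=
    (finite_Iio N).subset fun n hn => hmono.lt_iff_lt.1 (hn.2.trans_le hN)
  have hdur_nonneg : 0 ≤ κ + (t - τ) / τd := by
    have : 0 ≤ (t - τ) / τd := div_nonneg (sub_nonneg.2 hτt) (by linarith)
    linarith
  calc _ ≤ ENNReal.ofReal (κ + (t - τ) / τd) +
          ENNReal.ofReal (({n | h n ∈ Ico τ t}.ncard + 1) * Δ) :=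
        (volume_extended_inter_Icc_le hlen hsep hΔ.le hfin).trans (by gcongr; exact hdur τ t hτ hτt)
    _ = ENNReal.ofReal (κ + (t - τ) / τd + ({n | h n ∈ Ico τ t}.ncard + 1) * Δ) :=
        (ENNReal.ofReal_add hdur_nonneg (by positivity)).symm
    _ ≤ _ := by
        gcongr
        exact hfreq τ t hτ hτt

/-- **Chained inequality (19).**
Combining the structural bound on the extended DoS set with the
DoS-frequency and DoS-duration assumptions:
`|Ξ̄(τ,t)| ≤ κ + (t-τ)/τd + (η + (t-τ)/τf + 1)·Δ`. -/
theorem extended_DoS_measure_assumption_bound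
    (h len : ℕ → ℝ) (Δ : ℝ)
    (h0 : 0 ≤ h 0) (hlen : ∀ n, 0 < len n)
    (hsep : ∀ n, h n + len n < h (n + 1))
    (hΔ : 0 < Δ)
    (η τf κ τd : ℝ)
    (hη : 0 ≤ η) (hτf : Δ < τf) (hκ : 0 ≤ κ) (hτd : 1 < τd)
    (hfreq : ∀ τ t : ℝ, 0 ≤ τ → τ ≤ t →
      ((Set.ncard {n : ℕ | h n ∈ Set.Ico τ t} : ℝ) ≤ η + (t - τ) / τf))
    (hdur : ∀ τ t : ℝ, 0 ≤ τ → τ ≤ t →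
      volume ((⋃ n, Set.Ico (h n) (h n + len n)) ∩ Set.Icc τ t)
        ≤ ENNReal.ofReal (κ + (t - τ) / τd)) :
    ∀ τ t : ℝ, 0 ≤ τ → τ ≤ t →
      volume ((⋃ n, Set.Ico (h n) (h n + len n + Δ)) ∩ Set.Icc τ t)
        ≤ ENNReal.ofReal (κ + (t - τ) / τd + (η + (t - τ) / τf + 1) * Δ) :=
  extended_DoS_measure_assumption_bound_general h len Δ h0 hlen hsep hΔ η τf κ τd hτf hκ hτd hfreq
    hdur
end
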